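/- With the same setup (θ a generator of F_{q^m}^*, G ≤ F_q^* of order r, V an F_q-subspace of dimension t, α_1 = 0, α_2,...,α_ℓ as in the coset partition lemma): for all 0 ≤ τ ≤ q^m - 2 and all 1 ≤ i < j ≤ ℓ, the polynomials φ(θ^τ·x + α_i) and φ(x + α_j) are not equal. -/

import Mathlib

/-!
The polynomial `φ` is invariant under `x ↦ x g + β` for `g ∈ G`, `β ∈ V`: translating by `β`
permutes the inner factors, and since `G ⊆ F_q^*` scaling by `g` permutes both `G` and `V`, at the
cost of a factor `g ^ (|G| |V|) = 1`. As `deg φ = |G| |V|`, when the cosets `a g + V` are pairwise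
distinct the `|G| |V|` points `a g + β` exhaust the level set of `φ` through `a`.
Evaluating the identity at `x = 0` gives `φ(α_i) = φ(α_j)`, hence `α_i ∈ α_j g + V` for some `g`,
which the coset partition excludes both for `i = 0` and for `i ≠ 0`.
-/

open Polynomial Finset
open scoped Classical

/-- The (additive) coset `a + V` of a set `V`. -/
def coset {K : Type*} [Add K] (V : Set K) (a : K) : Set K := {x | ∃ v ∈ V, x = a + v}

/-- The polynomial `φ(x) = ∏_{g ∈ G} ∏_{β ∈ V} (x + g + β)`. -/
noncomputable def phiPoly {Fq K : Type*} [Field Fq] [Field K] [Fintype K] [Algebra Fq K]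
    (G : Subgroup Kˣ) (V : Submodule Fq K) : Polynomial K :=
  ∏ g : G, ∏ β : V, (X + C ((g : Kˣ) : K) + C (β : K))

section Coset

variable {R M : Type*} [Ring R] [AddCommGroup M] [Module R M] (V : Submodule R M)

lemma add_mem_coset (a : M) {v : M} (hv : v ∈ V) : a + v ∈ coset (V : Set M) a :=
  ⟨v, hv, rfl⟩

lemma self_mem_coset (a : M) : a ∈ coset (V : Set M) a := by
  simpa using add_mem_coset V a V.zero_mem

lemma coset_eq_of_mem_of_mem {a b x : M} (ha : x ∈ coset (V : Set M) a)
    (hb : x ∈ coset (V : Set M) b) : coset (V : Set M) a = coset (V : Set M) b := by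
  obtain ⟨v, hv, rfl⟩ := ha
  obtain ⟨w, hw, hx⟩ := hb
  ext y
  constructor
  · rintro ⟨u, hu, rfl⟩
    exact ⟨w - v + u, V.add_mem (V.sub_mem hw hv) hu, by rw [eq_sub_of_add_eq hx.symm]; abel⟩
  · rintro ⟨u, hu, rfl⟩
    exact ⟨v - w + u, V.add_mem (V.sub_mem hv hw) hu, by rw [eq_sub_of_add_eq hx]; abel⟩

end Coset

namespace Polynomial

variable {R : Type*} [CommRing R] [IsDomain R]

lemma mem_of_eval_eq_of_natDegree_le_card {p : R[X]} {s : Finset R} {c y : R}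
    (hp : 0 < p.natDegree) (hs : p.natDegree ≤ s.card) (hc : ∀ x ∈ s, p.eval x = c)
    (hy : p.eval y = c) : y ∈ s := by
  by_contra hys
  have hpc : p = C c := by
    refine eq_of_natDegree_lt_card_of_eval_eq' p (C c) (insert y s) ?_ ?_
    · simpa [hy] using hc
    · simpa [Finset.card_insert_of_notMem hys] using Nat.lt_succ_of_le hs
  simp [hpc] at hp

end Polynomial

section Phi

variable {Fq K : Type*} [Field Fq] [Field K] [Fintype K] [Algebra Fq K]
  (G : Subgroup Kˣ) (V : Submodule Fq K)

lemma natDegree_phiPoly : (phiPoly G V).natDegree = Fintype.card G * Fintype.card V := by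
  have hfac : ∀ (g : G) (β : V),
      X + C ((g : Kˣ) : K) + C (β : K) = X + C (((g : Kˣ) : K) + β) := by
    simp [add_assoc]
  simp only [phiPoly, hfac]
  rw [natDegree_prod_of_monic _ _ fun g _ => monic_prod_of_monic _ _ fun β _ => monic_X_add_C _]
  simp only [natDegree_prod_of_monic _ _ fun β _ => monic_X_add_C _, natDegree_X_add_C,
    Finset.sum_const, Finset.card_univ, smul_eq_mul, mul_one]

lemma eval_add_phiPoly (x : K) {β : K} (hβ : β ∈ V) :
    (phiPoly G V).eval (x + β) = (phiPoly G V).eval x := by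
  simp only [phiPoly, eval_prod, eval_add, eval_X, eval_C]
  refine Finset.prod_congr rfl fun g _ => ?_
  refine Fintype.prod_equiv (Equiv.addLeft ⟨β, hβ⟩) _ _ fun γ => ?_
  simp only [Equiv.coe_addLeft, Submodule.coe_add]
  ring

lemma eval_mul_phiPoly (hG : ∀ g : G, ∃ a : Fq, algebraMap Fq K a = ((g : Kˣ) : K))
    (x : K) (g : G) :
    (phiPoly G V).eval (x * ((g : Kˣ) : K)) = (phiPoly G V).eval x := by
  obtain ⟨c, hc⟩ := hG g
  have hc0 : c ≠ 0 := by
    rintro rfl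
    exact (g : Kˣ).ne_zero (by rw [← hc, map_zero])
  have hgG : ((g : Kˣ) : K) ^ Fintype.card G = 1 := by
    rw [← Units.val_pow_eq_pow_val, ← Subgroup.coe_pow, pow_card_eq_one, Subgroup.coe_one,
      Units.val_one]
  have hrow : ∀ h : G, ∏ β : V, (x * ((g : Kˣ) : K) + (((g * h : G) : Kˣ) : K) + (β : K)) =
      ((g : Kˣ) : K) ^ Fintype.card V * ∏ β : V, (x + ((h : Kˣ) : K) + (β : K)) := by
    intro h
    rw [← Finset.card_univ, ← Finset.prod_const, ← Finset.prod_mul_distrib]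
    refine (Fintype.prod_equiv (LinearEquiv.smulOfNeZero Fq V c hc0).toEquiv _ _ fun β => ?_).symm
    simp only [LinearEquiv.coe_toEquiv, LinearEquiv.smulOfNeZero_apply, Submodule.coe_smul,
      Algebra.smul_def, hc, Subgroup.coe_mul, Units.val_mul]
    ring
  simp only [phiPoly, eval_prod, eval_add, eval_X, eval_C]
  rw [← Fintype.prod_equiv (Equiv.mulLeft g) _ _ fun h => rfl]
  simp only [Equiv.coe_mulLeft, hrow, Finset.prod_mul_distrib, Finset.prod_const,
    Finset.card_univ]
  rw [← pow_mul, mul_comm (Fintype.card V), pow_mul, hgG, one_pow, one_mul]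

lemma exists_mem_coset_of_eval_phiPoly_eq
    (hG : ∀ g : G, ∃ a : Fq, algebraMap Fq K a = ((g : Kˣ) : K)) {a y : K}
    (ha : Function.Injective fun g : G => coset (V : Set K) (a * ((g : Kˣ) : K)))
    (hy : (phiPoly G V).eval y = (phiPoly G V).eval a) :
    ∃ g : G, y ∈ coset (V : Set K) (a * ((g : Kˣ) : K)) := by
  set f : G × V → K := fun gβ => a * ((gβ.1 : Kˣ) : K) + gβ.2
  have hf : Function.Injective f := by
    rintro ⟨g, β⟩ ⟨g', β'⟩ h
    have hg : g = g' := ha (coset_eq_of_mem_of_mem V (add_mem_coset V _ β.2)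
      (by simp only [f] at h; rw [h]; exact add_mem_coset V _ β'.2))
    subst hg
    simpa [f] using h
  have hmem := (phiPoly G V).mem_of_eval_eq_of_natDegree_le_card (s := Finset.univ.image f)
    (by rw [natDegree_phiPoly]; positivity)
    (by rw [natDegree_phiPoly, Finset.card_image_of_injective _ hf, Finset.card_univ,
      Fintype.card_prod])
    (fun _ hx => by
      obtain ⟨⟨g, β⟩, -, rfl⟩ := Finset.mem_image.mp hx
      rw [eval_add_phiPoly G V _ β.2, eval_mul_phiPoly G V hG]) hy
  obtain ⟨⟨g, β⟩, -, rfl⟩ := Finset.mem_image.mp hmem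
  exact ⟨g, add_mem_coset V _ β.2⟩

end Phi

theorem stmt5_general (q r m t : ℕ)
    (Fq K : Type*) [Field Fq] [Field K] [Fintype K] [Algebra Fq K]
    (V : Submodule Fq K)
    (G : Subgroup Kˣ)
    (hGsub : ∀ g : G, ∃ a : Fq, algebraMap Fq K a = ((g : Kˣ) : K))
    (θ : Kˣ)
    (α : Fin ((q ^ (m - t) - 1) / r + 1) → K) (hα0 : α 0 = 0)
    (hne : ∀ (i : Fin ((q ^ (m - t) - 1) / r + 1)) (g : G), i ≠ 0 →
      coset (V : Set K) (α i * ((g : Kˣ) : K)) ≠ coset (V : Set K) 0)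
    (hinj : ∀ (i j : Fin ((q ^ (m - t) - 1) / r + 1)) (gi gj : G), i ≠ 0 → j ≠ 0 →
      coset (V : Set K) (α i * ((gi : Kˣ) : K)) = coset (V : Set K) (α j * ((gj : Kˣ) : K)) →
      i = j ∧ gi = gj)
    (i j : Fin ((q ^ (m - t) - 1) / r + 1)) (hij : i < j) :
    ∀ τ : ℕ, τ ≤ q ^ m - 2 →
      (phiPoly G V).comp (C (((θ : Kˣ) : K) ^ τ) * X + C (α i)) ≠
      (phiPoly G V).comp (X + C (α j)) := by
  intro τ _ h
  have hj : j ≠ 0 := Fin.ne_zero_of_lt hij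
  have heval : (phiPoly G V).eval (α i) = (phiPoly G V).eval (α j) := by
    simpa [eval_comp] using congrArg (eval 0) h
  obtain ⟨g, hg⟩ := exists_mem_coset_of_eval_phiPoly_eq G V hGsub
    (fun g g' hgg' => (hinj j j g g' hj hj hgg').2) heval
  by_cases hi : i = 0
  · subst hi
    rw [hα0] at hg
    exact hne j g hj (coset_eq_of_mem_of_mem V hg (self_mem_coset V 0))
  · have hcoset : coset (V : Set K) (α j * ((g : Kˣ) : K)) =
        coset (V : Set K) (α i * (((1 : G) : Kˣ) : K)) :=
      coset_eq_of_mem_of_mem V hg (by simpa using self_mem_coset V (α i))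
    exact hij.ne (hinj j i g 1 hj hi hcoset).1.symm

/-- for `0 ≤ τ ≤ q^m - 2` and `i < j`, the polynomials
`φ(θ^τ x + α_i)` and `φ(x + α_j)` differ. -/
theorem stmt5 (q r m t : ℕ) (hq : IsPrimePow q) (hm : 1 ≤ m) (ht : t ≤ m - 1)
    (hr : r ∣ q - 1)
    (Fq K : Type*) [Field Fq] [Fintype Fq] [Field K] [Fintype K] [Algebra Fq K]
    (hcq : Fintype.card Fq = q) (hcK : Fintype.card K = q ^ m)
    (V : Submodule Fq K) (hV : Module.finrank Fq V = t)
    (G : Subgroup Kˣ) (hG : Nat.card G = r)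
    (hGsub : ∀ g : G, ∃ a : Fq, algebraMap Fq K a = ((g : Kˣ) : K))
    (θ : Kˣ) (hθ : ∀ x : Kˣ, x ∈ Subgroup.zpowers θ)
    (α : Fin ((q ^ (m - t) - 1) / r + 1) → K) (hα0 : α 0 = 0)
    (hne : ∀ (i : Fin ((q ^ (m - t) - 1) / r + 1)) (g : G), i ≠ 0 →
      coset (V : Set K) (α i * ((g : Kˣ) : K)) ≠ coset (V : Set K) 0)
    (hinj : ∀ (i j : Fin ((q ^ (m - t) - 1) / r + 1)) (gi gj : G), i ≠ 0 → j ≠ 0 →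
      coset (V : Set K) (α i * ((gi : Kˣ) : K)) = coset (V : Set K) (α j * ((gj : Kˣ) : K)) →
      i = j ∧ gi = gj)
    (hcover : (⋃ i, ⋃ g : G, coset (V : Set K) (α i * ((g : Kˣ) : K))) = Set.univ)
    (i j : Fin ((q ^ (m - t) - 1) / r + 1)) (hij : i < j) :
    ∀ τ : ℕ, τ ≤ q ^ m - 2 →
      (phiPoly G V).comp (C (((θ : Kˣ) : K) ^ τ) * X + C (α i)) ≠
      (phiPoly G V).comp (X + C (α j)) :=
  stmt5_general q r m t Fq K V G hGsub θ α hα0 hne hinj i j hij
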